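/- Let p be a prime and let A be a non-confluent (d+1)×(d+1) integer matrix. Set F = diag(p,1,…,1) ∈ Mat(d+1, ℤ). Then there exist r ≥ 0, matrices P₁,…,P_r, P ∈ GL(d+1, ℤ), and a d×(d+1) integer matrix B which is sub-non-confluent and sub-p-nondegenerate, such that P · F⁻¹P_r ⋯ F⁻¹P₁ · A = B̂. -/

import Mathlib

/-!
Start from `N = A`: since `A` is non-confluent, some integer vector `q` has `q N = (1, …, 1)`.
While `p ∣ det N`, a kernel vector of `N` mod `p`, divided by the gcd of its entries, is a
primitive integer vector `w` with `p ∣ w N`; completing `w` to a unimodular `U` with first row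
`w` makes `N' = F⁻¹ U N` integral, with `|det N'| = |det N| / p` and `(q U⁻¹ F) N' = q N`.
When `p ∤ det N`, complete `q` to a unimodular `Q`: then `Q N = B̂`, and `det B̂` is a unit both
in `ℚ` and in `𝔽_p`, so every set of columns of `B̂` is independent over both fields.
-/

open Finset

/-- `A` is `p`-nondegenerate: for every subset `θ` of the column indices, the rank over
`ℚ` of the submatrix `A[θ]` equals the rank over `𝔽_p` of its reduction modulo `p`. -/
def PNondeg (p : ℕ) {d n : ℕ} (A : Matrix (Fin (d + 1)) (Fin n) ℤ) : Prop :=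
  ∀ θ : Finset (Fin n),
    ((A.submatrix id (fun j : θ => (j : Fin n))).map (Int.cast : ℤ → ℚ)).rank =
      ((A.submatrix id (fun j : θ => (j : Fin n))).map (Int.cast : ℤ → ZMod p)).rank

/-- The matrix `F = diag(p, 1, …, 1) ∈ Mat(d+1, ℤ)`. -/
def Fmat (p d : ℕ) : Matrix (Fin (d + 1)) (Fin (d + 1)) ℤ :=
  Matrix.diagonal (fun i => if i = 0 then (p : ℤ) else 1)

/-- The rational matrix `F⁻¹ P_r ⋯ F⁻¹ P_1 A`, with `P i = P_{i+1}`. -/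
noncomputable def tower (p d : ℕ) (A : Matrix (Fin (d + 1)) (Fin (d + 1)) ℤ) :
    (r : ℕ) → (Fin r → Matrix (Fin (d + 1)) (Fin (d + 1)) ℤ) →
      Matrix (Fin (d + 1)) (Fin (d + 1)) ℚ
  | 0, _ => A.map (Int.cast : ℤ → ℚ)
  | r + 1, P =>
      ((Fmat p d).map (Int.cast : ℤ → ℚ))⁻¹ *
        ((P (Fin.last r)).map (Int.cast : ℤ → ℚ)) *
        tower p d A r (fun i => P i.castSucc)

/-- `B̂`: the `(d+1) × n` matrix obtained by prepending the row `(1, …, 1)` to the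
`d × n` matrix `B`. -/
def hatMat {d n : ℕ} (B : Matrix (Fin d) (Fin n) ℤ) : Matrix (Fin (d + 1)) (Fin n) ℤ :=
  Matrix.of fun i j => Fin.cases 1 (fun i' => B i' j) i

/-- `A` is standard non-confluent: its first row is `(1, …, 1)` and it has rank `d + 1`
over `ℚ`. -/
def StdNonConfluent {d n : ℕ} (A : Matrix (Fin (d + 1)) (Fin n) ℤ) : Prop :=
  (∀ j, A 0 j = 1) ∧ (A.map (Int.cast : ℤ → ℚ)).rank = d + 1

/-- `A` is non-confluent: `P * A` is standard non-confluent for some `P ∈ GL(d+1, ℤ)`. -/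
def NonConfluent {d n : ℕ} (A : Matrix (Fin (d + 1)) (Fin n) ℤ) : Prop :=
  ∃ P : Matrix (Fin (d + 1)) (Fin (d + 1)) ℤ, IsUnit P.det ∧ StdNonConfluent (P * A)

/-- `B` is sub-non-confluent: `B̂` has rank `d + 1` over `ℚ`. -/
def SubNonConfluent {d n : ℕ} (B : Matrix (Fin d) (Fin n) ℤ) : Prop :=
  ((hatMat B).map (Int.cast : ℤ → ℚ)).rank = d + 1

/-- `B` is sub-`p`-nondegenerate: `B̂` is `p`-nondegenerate. -/
def SubPNondeg (p : ℕ) {d n : ℕ} (B : Matrix (Fin d) (Fin n) ℤ) : Prop :=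
  PNondeg p (hatMat B)

open Matrix

section PrincipalIdealRing

variable {R : Type*} [CommRing R] [IsDomain R] [IsPrincipalIdealRing R]

theorem exists_isUnit_det_row_zero_eq {n : ℕ} {w c : Fin (n + 1) → R} (hc : c ⬝ᵥ w = 1) :
    ∃ P : Matrix (Fin (n + 1)) (Fin (n + 1)) R, IsUnit P.det ∧ P 0 = w := by
  let φ := dotProductBilin R R c
  have hφw : φ w = 1 := hc
  obtain ⟨m, bK⟩ := Submodule.basisOfPid (Pi.basisFun R (Fin (n + 1))) (LinearMap.ker φ)
  have hli : ∀ a : R, ∀ x ∈ LinearMap.ker φ, a • w + x = 0 → a = 0 := fun a x hx h => by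
    simpa [hφw, LinearMap.mem_ker.mp hx] using congrArg φ h
  have hsp : ∀ z, ∃ a : R, z + a • w ∈ LinearMap.ker φ := fun z =>
    ⟨-φ z, by simp [hφw]⟩
  -- `w` completes a basis of `ker φ` to a basis of `R^(n+1)`, since `φ w = 1`.
  let b := Module.Basis.mkFinCons w bK hli hsp
  have hm : m + 1 = n + 1 := by
    simpa using (Module.finrank_eq_card_basis b).symm.trans
      (Module.finrank_eq_card_basis (Pi.basisFun R (Fin (n + 1))))
  let b' := b.reindex (finCongr hm)
  refine ⟨((Pi.basisFun R _).toMatrix b')ᵀ, ?_, funext fun j => ?_⟩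
  · rw [det_transpose]
    exact IsUnit.of_mul_eq_one _ (by
      rw [← det_mul, Module.Basis.toMatrix_mul_toMatrix_flip, det_one])
  · simp [b', b, Module.Basis.toMatrix_apply]

theorem exists_eq_smul_and_dotProduct_eq_one {ι : Type*} [Fintype ι] {w : ι → R}
    (hw : w ≠ 0) :
    ∃ (g : R) (w' c : ι → R), w = g • w' ∧ c ⬝ᵥ w' = 1 := by
  let I : Ideal R := Ideal.span (Set.range w)
  let g := Submodule.IsPrincipal.generator I
  have hg : ∀ i, g ∣ w i := fun i => by
    rw [← Ideal.mem_span_singleton, Ideal.span_singleton_generator]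
    exact Ideal.subset_span (Set.mem_range_self i)
  choose w' hw' using hg
  obtain ⟨c, hc⟩ := (Submodule.mem_span_range_iff_exists_fun R).mp
    (Submodule.IsPrincipal.generator_mem I)
  have hg0 : g ≠ 0 := fun h => hw (funext fun i => by simp [hw' i, h])
  refine ⟨g, w', c, funext hw', mul_left_cancel₀ hg0 ?_⟩
  calc g * c ⬝ᵥ w' = ∑ i, c i • w i := by
        simp only [dotProduct, Finset.mul_sum, hw', smul_eq_mul]
        exact Finset.sum_congr rfl fun i _ => by ring
    _ = g * 1 := by rw [hc, mul_one]

end PrincipalIdealRing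

theorem Matrix.det_map_intCast {R : Type*} [CommRing R] {n : Type*} [Fintype n] [DecidableEq n]
    (M : Matrix n n ℤ) : (M.map (Int.cast : ℤ → R)).det = M.det :=
  ((Int.castRingHom R).map_det M).symm

theorem Matrix.map_intCast_mul {R : Type*} [Ring R] {l m n : Type*} [Fintype m]
    (M : Matrix l m ℤ) (N : Matrix m n ℤ) :
    (M * N).map (Int.cast : ℤ → R) = M.map Int.cast * N.map Int.cast :=
  Matrix.map_mul (f := Int.castRingHom R)

section Rank

variable {K : Type*} [Field K] {n : Type*} [Fintype n] [DecidableEq n]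

theorem Matrix.isUnit_of_rank_eq_card {M : Matrix n n K} (h : M.rank = Fintype.card n) :
    IsUnit M :=
  linearIndependent_cols_iff_isUnit.mp (linearIndependent_iff_card_eq_finrank_span.mpr
    (by rw [Set.finrank, ← rank_eq_finrank_span_cols, h]))

theorem Matrix.rank_submatrix_id_of_isUnit {M : Matrix n n K} (hM : IsUnit M) {α : Type*}
    [Fintype α] {g : α → n} (hg : Function.Injective g) :
    (M.submatrix id g).rank = Fintype.card α := by
  rw [rank_eq_finrank_span_cols]
  exact finrank_span_eq_card ((linearIndependent_cols_of_isUnit hM).comp g hg)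

theorem Matrix.isUnit_map_intCast {M : Matrix n n ℤ} (h : (M.det : K) ≠ 0) :
    IsUnit (M.map (Int.cast : ℤ → K)) :=
  (isUnit_iff_isUnit_det _).mpr (by rw [det_map_intCast]; exact h.isUnit)

end Rank

theorem exists_dotProduct_eq_one_and_dvd_vecMul {ι : Type*} [Fintype ι] [DecidableEq ι]
    {p : ℕ} (hp : p.Prime) {N : Matrix ι ι ℤ} (h : (p : ℤ) ∣ N.det) :
    ∃ w c : ι → ℤ, c ⬝ᵥ w = 1 ∧ ∀ j, (p : ℤ) ∣ (w ᵥ* N) j := by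
  have := Fact.mk hp
  have hdet : (N.map (Int.cast : ℤ → ZMod p)).det = 0 := by
    rw [det_map_intCast]
    exact (ZMod.intCast_zmod_eq_zero_iff_dvd _ p).mpr h
  obtain ⟨v, hv0, hv⟩ := exists_vecMul_eq_zero_iff.mpr hdet
  let u : ι → ℤ := fun i => (v i).cast
  have hu : ∀ i, (u i : ZMod p) = v i := fun i => ZMod.intCast_zmod_cast (v i)
  obtain ⟨g, w, c, hgw, hcw⟩ := exists_eq_smul_and_dotProduct_eq_one (w := u) fun h0 =>
    hv0 (funext fun i => by rw [← hu i, h0]; simp)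
  have hpg : ¬ (p : ℤ) ∣ g := fun hdvd => hv0 (funext fun i => by
    rw [← hu i, hgw, Pi.smul_apply, smul_eq_mul,
      (ZMod.intCast_zmod_eq_zero_iff_dvd _ p).mpr (hdvd.mul_right (w i))]
    rfl)
  refine ⟨w, c, hcw, fun j => ?_⟩
  have hpu : (p : ℤ) ∣ (u ᵥ* N) j := by
    have hcast : (((u ᵥ* N) j : ℤ) : ZMod p) = (v ᵥ* N.map Int.cast) j := by
      simp [vecMul, dotProduct, hu]
    rw [← ZMod.intCast_zmod_eq_zero_iff_dvd, hcast, hv]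
    rfl
  rw [hgw, smul_vecMul, Pi.smul_apply, smul_eq_mul] at hpu
  exact ((Nat.prime_iff_prime_int.mp hp).dvd_or_dvd hpu).resolve_left hpg

section Descent

variable {p d : ℕ}

theorem det_fmat : (Fmat p d).det = p := by
  rw [Fmat, det_diagonal, Finset.prod_ite_eq' Finset.univ (0 : Fin (d + 1)) (fun _ => (p : ℤ))]
  simp

theorem exists_fmat_mul_eq {n : Type*} {M : Matrix (Fin (d + 1)) n ℤ}
    (h : ∀ j, (p : ℤ) ∣ M 0 j) : ∃ N : Matrix (Fin (d + 1)) n ℤ, Fmat p d * N = M := by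
  choose m hm using h
  refine ⟨M.updateRow 0 m, ?_⟩
  ext i j
  rw [Fmat, diagonal_mul]
  rcases eq_or_ne i 0 with rfl | hi
  · simp [hm]
  · simp [hi]

theorem exists_fmat_mul_eq_mul_of_dvd_det (hp : p.Prime)
    {N : Matrix (Fin (d + 1)) (Fin (d + 1)) ℤ} (h : (p : ℤ) ∣ N.det) :
    ∃ U N', IsUnit U.det ∧ Fmat p d * N' = U * N := by
  obtain ⟨w, c, hcw, hwN⟩ := exists_dotProduct_eq_one_and_dvd_vecMul hp h
  obtain ⟨U, hU, hU0⟩ := exists_isUnit_det_row_zero_eq hcw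
  obtain ⟨N', hN'⟩ := exists_fmat_mul_eq (p := p) (M := U * N) fun j => by
    rw [mul_apply_eq_vecMul, hU0]
    exact hwN j
  exact ⟨U, N', hU, hN'⟩

theorem natAbs_det_mul_eq_of_fmat_mul_eq {N N' U : Matrix (Fin (d + 1)) (Fin (d + 1)) ℤ}
    (hU : IsUnit U.det) (h : Fmat p d * N' = U * N) : N'.det.natAbs * p = N.det.natAbs := by
  have := congrArg (fun M => M.det.natAbs) h
  simp only [det_mul, det_fmat, Int.natAbs_mul, Int.natAbs_natCast,
    Int.isUnit_iff_natAbs_eq.mp hU, one_mul] at this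
  rw [← this, mul_comm]

def TowerReachable (p : ℕ) {d : ℕ} (A N : Matrix (Fin (d + 1)) (Fin (d + 1)) ℤ) : Prop :=
  ∃ (r : ℕ) (P : Fin r → Matrix (Fin (d + 1)) (Fin (d + 1)) ℤ),
    (∀ i, IsUnit (P i).det) ∧ N.map (Int.cast : ℤ → ℚ) = tower p d A r P

variable {A N N' U : Matrix (Fin (d + 1)) (Fin (d + 1)) ℤ}

theorem towerReachable_self : TowerReachable p A A :=
  ⟨0, Fin.elim0, fun i => i.elim0, rfl⟩

theorem TowerReachable.of_fmat_mul_eq (hN : TowerReachable p A N) (hp : p ≠ 0)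
    (hU : IsUnit U.det) (h : Fmat p d * N' = U * N) : TowerReachable p A N' := by
  obtain ⟨r, P, hP, hNP⟩ := hN
  refine ⟨r + 1, Fin.snoc P U, Fin.lastCases (by simpa) (by simpa), ?_⟩
  have hF : IsUnit ((Fmat p d).map (Int.cast : ℤ → ℚ)).det := by
    rw [det_map_intCast, det_fmat]
    exact isUnit_iff_ne_zero.mpr (by exact_mod_cast hp)
  have hmap := congrArg (Matrix.map · (Int.cast : ℤ → ℚ)) h
  simp only [map_intCast_mul] at hmap
  rw [tower, Fin.snoc_last]
  simp only [Fin.snoc_castSucc]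
  rw [← hNP, Matrix.mul_assoc]
  convert (nonsing_inv_mul_cancel_left _ _ hF).symm using 2
  exact hmap.symm

theorem exists_towerReachable_not_dvd_det (hp : p.Prime) (hN : TowerReachable p A N)
    (h0 : N.det ≠ 0) {q : Fin (d + 1) → ℤ} (hq : q ᵥ* N = 1) :
    ∃ N' q', TowerReachable p A N' ∧ ¬ (p : ℤ) ∣ N'.det ∧ q' ᵥ* N' = 1 := by
  induction hk : N.det.natAbs using Nat.strong_induction_on generalizing N q with
  | _ k ih =>
  by_cases hdvd : (p : ℤ) ∣ N.det
  · obtain ⟨U, N', hU, hFN⟩ := exists_fmat_mul_eq_mul_of_dvd_det hp hdvd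
    have hdet := natAbs_det_mul_eq_of_fmat_mul_eq hU hFN
    have hN'0 : N'.det ≠ 0 := fun h => h0 (by simpa [h] using hdet.symm)
    refine ih _ ?_ (hN.of_fmat_mul_eq hp.ne_zero hU hFN) hN'0
      (q := q ᵥ* (U⁻¹ * Fmat p d)) ?_ rfl
    · have := Int.natAbs_pos.mpr hN'0
      have := hp.two_le
      nlinarith
    · rw [vecMul_vecMul, Matrix.mul_assoc, hFN, nonsing_inv_mul_cancel_left _ _ hU, hq]
  · exact ⟨N, q, hN, hdvd, hq⟩

end Descent

theorem exists_hatMat_eq_mul_of_vecMul_eq_one {d n : ℕ}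
    {N : Matrix (Fin (d + 1)) (Fin (n + 1)) ℤ} {q : Fin (d + 1) → ℤ} (hq : q ᵥ* N = 1) :
    ∃ (Q : Matrix (Fin (d + 1)) (Fin (d + 1)) ℤ) (B : Matrix (Fin d) (Fin (n + 1)) ℤ),
      IsUnit Q.det ∧ hatMat B = Q * N := by
  have hc : (fun i => N i 0) ⬝ᵥ q = 1 := by
    rw [dotProduct_comm]
    exact congrFun hq 0
  obtain ⟨Q, hQ, hQ0⟩ := exists_isUnit_det_row_zero_eq hc
  refine ⟨Q, (Q * N).submatrix Fin.succ id, hQ, ?_⟩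
  ext i j
  cases i using Fin.cases with
  | zero => simp [hatMat, mul_apply_eq_vecMul, hQ0, hq]
  | succ i => rfl

theorem pNondeg_of_not_dvd_det {p : ℕ} (hp : p.Prime) {d : ℕ}
    {C : Matrix (Fin (d + 1)) (Fin (d + 1)) ℤ} (h : ¬ (p : ℤ) ∣ C.det) : PNondeg p C := by
  have := Fact.mk hp
  intro θ
  have hC0 : C.det ≠ 0 := fun h0 => h (h0 ▸ dvd_zero _)
  have hQ : IsUnit (C.map (Int.cast : ℤ → ℚ)) := isUnit_map_intCast (by exact_mod_cast hC0)
  have hZ : IsUnit (C.map (Int.cast : ℤ → ZMod p)) :=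
    isUnit_map_intCast (by rwa [Ne, ZMod.intCast_zmod_eq_zero_iff_dvd])
  rw [← submatrix_map, ← submatrix_map, rank_submatrix_id_of_isUnit hQ Subtype.val_injective,
    rank_submatrix_id_of_isUnit hZ Subtype.val_injective]

theorem subNonConfluent_of_det_ne_zero {d : ℕ} {B : Matrix (Fin d) (Fin (d + 1)) ℤ}
    (h : (hatMat B).det ≠ 0) : SubNonConfluent B := by
  rw [SubNonConfluent, rank_of_isUnit _ (isUnit_map_intCast (by exact_mod_cast h)),
    Fintype.card_fin]

theorem NonConfluent.det_ne_zero {d : ℕ} {A : Matrix (Fin (d + 1)) (Fin (d + 1)) ℤ}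
    (hA : NonConfluent A) : A.det ≠ 0 := by
  obtain ⟨P, -, -, hrank⟩ := hA
  have := (isUnit_iff_isUnit_det _).mp
    (isUnit_of_rank_eq_card (hrank.trans (Fintype.card_fin _).symm))
  rw [det_map_intCast, det_mul] at this
  exact right_ne_zero_of_mul (by exact_mod_cast this.ne_zero)

theorem NonConfluent.exists_vecMul_eq_one {d n : ℕ} {A : Matrix (Fin (d + 1)) (Fin n) ℤ}
    (hA : NonConfluent A) : ∃ q, q ᵥ* A = 1 := by
  obtain ⟨P, -, hrow, -⟩ := hA
  exact ⟨P 0, funext fun j => by rw [← mul_apply_eq_vecMul]; exact hrow j⟩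

/-- for a non-confluent square integer matrix `A`, there exist `r ≥ 0`,
`P₁, …, P_r, P ∈ GL(d+1, ℤ)` and a `d × (d+1)` integer matrix `B` which is
sub-non-confluent and sub-`p`-nondegenerate, such that
`P ⬝ F⁻¹ P_r ⋯ F⁻¹ P₁ ⬝ A = B̂`. -/
theorem stmt15 (p : ℕ) (hp : p.Prime) (d : ℕ)
    (A : Matrix (Fin (d + 1)) (Fin (d + 1)) ℤ) (hA : NonConfluent A) :
    ∃ r : ℕ, ∃ P : Fin r → Matrix (Fin (d + 1)) (Fin (d + 1)) ℤ,
      ∃ Q : Matrix (Fin (d + 1)) (Fin (d + 1)) ℤ,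
        (∀ i, IsUnit (P i).det) ∧ IsUnit Q.det ∧
        ∃ B : Matrix (Fin d) (Fin (d + 1)) ℤ,
          SubNonConfluent B ∧ SubPNondeg p B ∧
          (Q.map (Int.cast : ℤ → ℚ)) * tower p d A r P =
            (hatMat B).map (Int.cast : ℤ → ℚ) := by
  obtain ⟨q, hq⟩ := hA.exists_vecMul_eq_one
  obtain ⟨N, q', ⟨r, P, hP, hNP⟩, hpN, hq'⟩ :=
    exists_towerReachable_not_dvd_det hp towerReachable_self hA.det_ne_zero hq
  obtain ⟨Q, B, hQ, hB⟩ := exists_hatMat_eq_mul_of_vecMul_eq_one hq'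
  have hpB : ¬ (p : ℤ) ∣ (hatMat B).det := by rwa [hB, det_mul, hQ.dvd_mul_left]
  refine ⟨r, P, Q, hP, hQ, B, subNonConfluent_of_det_ne_zero fun h0 => hpB (h0 ▸ dvd_zero _),
    pNondeg_of_not_dvd_det hp hpB, ?_⟩
  rw [← hNP, hB]
  exact (map_intCast_mul Q N).symm
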